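/- arXiv:2008.01894 — 4 statements merged into one kernel-verified Lean document; each statement's English description precedes it below -/
import Mathlib

section
/- Let n ≥ 1 and p_1, …, p_n > −1 satisfy q_k := Σ_{i=k+1}^n p_i > −1 for each k ∈ {1,…,n} (with q_n := 0), and set q_0 := Σ_{k=1}^n p_k. Then E[ ∏_{k=1}^n ℓ_k^{p_k} ] = T^{q_0} · ∏_{k=1}^n B(1+p_k, 1+q_k). In particular, E[ℓ_k^p] = T^p·(1+p)^{−k} for every k ≥ 1 and p > −1. -/
open MeasureTheory ProbabilityTheory Real Finset

noncomputable section

/-- stick-breaking remainder `L_n = T ∏_{i=1}^n U_i`, built from the values `u i` of the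
uniform random variables. -/
def Lrem (T : ℝ) (u : ℕ → ℝ) (n : ℕ) : ℝ := T * ∏ i ∈ Finset.Icc 1 n, u i

/-- stick length `ℓ_i = L_{i-1} - L_i`, for `i ≥ 1`. -/
def stick (T : ℝ) (u : ℕ → ℝ) (i : ℕ) : ℝ := Lrem T u (i - 1) - Lrem T u i

/-- the uniform distribution on `(0,1)`. -/
def unif01 : Measure ℝ := volume.restrict (Set.Ioo (0:ℝ) 1)

/-- the Beta function. -/
def betaFn (x y : ℝ) : ℝ := Real.Gamma x * Real.Gamma y / Real.Gamma (x + y)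

variable {Ω : Type*}

/-- `(U_i)` is an i.i.d. sequence of uniform random variables on `(0,1)`. -/
def UHyp [MeasurableSpace Ω] (μ : Measure Ω) (U : ℕ → Ω → ℝ) : Prop :=
  (∀ i, Measurable (U i)) ∧ (∀ i, μ.map (U i) = unif01) ∧
    iIndepFun U μ

lemma betaFn_symm (x y : ℝ) : betaFn x y = betaFn y x := by
  unfold betaFn; rw [mul_comm (Real.Gamma x), add_comm]

lemma betaFn_one (x : ℝ) (hx : 0 < x) : betaFn 1 x = x⁻¹ := by
  unfold betaFn
  rw [Real.Gamma_one, add_comm, Real.Gamma_add_one hx.ne']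
  rw [one_mul, mul_comm]
  field_simp [Real.Gamma_pos_of_pos hx |>.ne']

lemma beta_integral_real (a b : ℝ) (ha : -1 < a) (hb : -1 < b) :
    ∫ x in Set.Ioo (0:ℝ) 1, x ^ a * (1 - x) ^ b = betaFn (1 + a) (1 + b) := by
  have key : Complex.betaIntegral ((1+a : ℝ) : ℂ) ((1+b : ℝ) : ℂ)
      = ((∫ x in (0:ℝ)..1, x ^ a * (1 - x) ^ b : ℝ) : ℂ) := by
    rw [Complex.betaIntegral, ← intervalIntegral.integral_ofReal]
    apply intervalIntegral.integral_congr
    intro x hx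
    rw [Set.uIcc_of_le (by norm_num : (0:ℝ) ≤ 1)] at hx
    obtain ⟨hx0, hx1⟩ := hx
    have h1 : ((1+a : ℝ) : ℂ) - 1 = ((a : ℝ) : ℂ) := by push_cast; ring
    have h2 : ((1+b : ℝ) : ℂ) - 1 = ((b : ℝ) : ℂ) := by push_cast; ring
    have h3 : (1 : ℂ) - (x : ℝ) = ((1 - x : ℝ) : ℂ) := by push_cast; ring
    show (x : ℂ) ^ (((1+a : ℝ) : ℂ) - 1) * ((1:ℂ) - (x:ℝ)) ^ (((1+b : ℝ) : ℂ) - 1)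
        = ((x ^ a * (1 - x) ^ b : ℝ) : ℂ)
    rw [h1, h2, h3, ← Complex.ofReal_cpow hx0, ← Complex.ofReal_cpow (by linarith : (0:ℝ) ≤ 1 - x)]
    norm_cast
  have hG := Complex.Gamma_mul_Gamma_eq_betaIntegral
    (s := ((1+a : ℝ) : ℂ)) (t := ((1+b : ℝ) : ℂ))
    (by rw [Complex.ofReal_re]; linarith) (by rw [Complex.ofReal_re]; linarith)
  have hsum : ((1+a : ℝ) : ℂ) + ((1+b : ℝ) : ℂ) = ((1+a+(1+b) : ℝ) : ℂ) := by push_cast; ring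
  rw [hsum, key] at hG
  rw [Complex.Gamma_ofReal, Complex.Gamma_ofReal, Complex.Gamma_ofReal] at hG
  have hne : Real.Gamma (1+a+(1+b)) ≠ 0 := (Real.Gamma_pos_of_pos (by linarith)).ne'
  have heq : (∫ x in (0:ℝ)..1, x ^ a * (1 - x) ^ b : ℝ)
      = Real.Gamma (1+a) * Real.Gamma (1+b) / Real.Gamma (1+a+(1+b)) := by
    have h : Real.Gamma (1+a) * Real.Gamma (1+b)
        = Real.Gamma (1+a+(1+b)) * ∫ x in (0:ℝ)..1, x ^ a * (1 - x) ^ b := by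
      exact_mod_cast hG
    field_simp
    linarith [h]
  rw [intervalIntegral.integral_of_le (by norm_num : (0:ℝ) ≤ 1),
    MeasureTheory.integral_Ioc_eq_integral_Ioo] at heq
  rw [heq]; rfl

lemma integral_indep_prod {Ω : Type*} [MeasurableSpace Ω] (μ : Measure Ω) [IsProbabilityMeasure μ]
    (X : ℕ → Ω → ℝ) (hXm : ∀ i, Measurable (X i))
    (hind : iIndepFun X μ) (s : Finset ℕ) :
    ∫ ω, ∏ i ∈ s, X i ω ∂μ = ∏ i ∈ s, ∫ ω, X i ω ∂μ := by
  classical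
  induction s using Finset.cons_induction with
  | empty => simp
  | cons a s ha ih =>
    have hprodm : Measurable (∏ j ∈ s, X j) := by
      rw [show (∏ j ∈ s, X j) = fun ω => ∏ j ∈ s, X j ω from funext fun ω => by
        simp [Finset.prod_apply]]
      exact s.measurable_prod (fun i _ => hXm i)
    have hi : IndepFun (X a) (∏ j ∈ s, X j) μ :=
      (hind.indepFun_finsetProd_of_notMem hXm ha).symm
    have h := hi.integral_mul_eq_mul_integral (hXm a).aestronglyMeasurable hprodm.aestronglyMeasurable
    calc ∫ ω, ∏ i ∈ Finset.cons a s ha, X i ω ∂μ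
        = ∫ ω, X a ω * (∏ j ∈ s, X j) ω ∂μ := by
          simp [Finset.prod_insert ha, Finset.prod_apply]
      _ = integral μ (X a) * integral μ (∏ j ∈ s, X j) := h
      _ = (∫ ω, X a ω ∂μ) * ∫ ω, ∏ i ∈ s, X i ω ∂μ := by
          congr 1
          apply integral_congr_ae
          filter_upwards with ω
          simp [Finset.prod_apply]
      _ = ∏ i ∈ Finset.cons a s ha, ∫ ω, X i ω ∂μ := by
          rw [ih, Finset.prod_cons]

lemma stick_prod_eq (T : ℝ) (hT : 0 < T) (u : ℕ → ℝ) (hu : ∀ i, u i ∈ Set.Ioo (0:ℝ) 1)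
    (n : ℕ) (p : ℕ → ℝ) :
    ∏ k ∈ Finset.Icc 1 n, stick T u k ^ p k
      = T ^ (∑ k ∈ Finset.Icc 1 n, p k) *
        ∏ k ∈ Finset.Icc 1 n, (u k ^ (∑ i ∈ Finset.Icc (k+1) n, p i) * (1 - u k) ^ p k) := by
  have hu0 : ∀ i, 0 < u i := fun i => (hu i).1
  have hu1 : ∀ i, u i < 1 := fun i => (hu i).2
  have step1 : ∀ k ∈ Finset.Icc 1 n, stick T u k ^ p k
      = T ^ p k * (∏ i ∈ Finset.Icc 1 (k-1), u i ^ p k) * (1 - u k) ^ p k := by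
    intro k hk
    have hk1 : 1 ≤ k := (Finset.mem_Icc.mp hk).1
    have kn : k ∉ Finset.Icc 1 (k-1) := by simp [Finset.mem_Icc]; omega
    have hins : Finset.Icc 1 k = insert k (Finset.Icc 1 (k-1)) := by
      ext i; simp only [Finset.mem_Icc, Finset.mem_insert]; omega
    have hst : stick T u k = (T * ∏ i ∈ Finset.Icc 1 (k-1), u i) * (1 - u k) := by
      rw [stick, Lrem, Lrem, hins, Finset.prod_insert kn]; ring
    have hPpos : (0:ℝ) < T * ∏ i ∈ Finset.Icc 1 (k-1), u i :=
      mul_pos hT (Finset.prod_pos (fun i _ => hu0 i))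
    rw [hst, Real.mul_rpow hPpos.le (by linarith [hu1 k]),
      Real.mul_rpow hT.le (Finset.prod_nonneg (fun i _ => (hu0 i).le)),
      ← Real.finset_prod_rpow _ _ (fun i _ => (hu0 i).le)]
  rw [Finset.prod_congr rfl step1, Finset.prod_mul_distrib, Finset.prod_mul_distrib,
    ← Real.rpow_sum_of_pos hT]
  have hswap : ∏ k ∈ Finset.Icc 1 n, ∏ i ∈ Finset.Icc 1 (k-1), u i ^ p k
      = ∏ i ∈ Finset.Icc 1 n, u i ^ (∑ k ∈ Finset.Icc (i+1) n, p k) := by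
    rw [Finset.prod_comm' (t' := Finset.Icc 1 n) (s' := fun i => Finset.Icc (i+1) n)
      (by intro k i; simp only [Finset.mem_Icc]; omega)]
    exact Finset.prod_congr rfl fun i _ => (Real.rpow_sum_of_pos (hu0 i) _ _).symm
  rw [hswap, mul_assoc, ← Finset.prod_mul_distrib]

/-- **Lemma A.1 (a)**: moments of the stick-breaking process. -/
theorem stick_breaking_moments
    {Ω : Type*} [MeasurableSpace Ω] (μ : Measure Ω) [IsProbabilityMeasure μ]
    (U : ℕ → Ω → ℝ) (hU : UHyp μ U) (T : ℝ) (hT : 0 < T) :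
    (∀ n : ℕ, 1 ≤ n → ∀ p : ℕ → ℝ,
      (∀ k ∈ Finset.Icc 1 n, -1 < p k) →
      (∀ k ∈ Finset.Icc 1 n, -1 < ∑ i ∈ Finset.Icc (k+1) n, p i) →
      ∫ ω, ∏ k ∈ Finset.Icc 1 n, stick T (fun j => U j ω) k ^ p k ∂μ
        = T ^ (∑ k ∈ Finset.Icc 1 n, p k) *
            ∏ k ∈ Finset.Icc 1 n, betaFn (1 + p k) (1 + ∑ i ∈ Finset.Icc (k+1) n, p i)) ∧
    (∀ k : ℕ, 1 ≤ k → ∀ p : ℝ, -1 < p →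
      ∫ ω, stick T (fun j => U j ω) k ^ p ∂μ = T ^ p * (1 + p) ^ (-(k:ℝ))) := by
  obtain ⟨hUm, hUd, hUi⟩ := hU
  have hgm : ∀ (c d : ℝ), Measurable (fun x : ℝ => x ^ c * (1 - x) ^ d) := by
    intro c d; fun_prop
  have hae : ∀ᵐ ω ∂μ, ∀ i, U i ω ∈ Set.Ioo (0:ℝ) 1 := by
    rw [ae_all_iff]
    intro i
    apply (ae_map_iff (hUm i).aemeasurable measurableSet_Ioo).mp
    rw [hUd i]
    exact ae_restrict_mem measurableSet_Ioo
  have hint : ∀ (c d : ℝ) (k : ℕ), ∫ ω, (U k ω) ^ c * (1 - U k ω) ^ d ∂μ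
      = ∫ x in Set.Ioo (0:ℝ) 1, x ^ c * (1 - x) ^ d := by
    intro c d k
    have h := integral_map (μ := μ) (φ := U k) (f := fun x : ℝ => x ^ c * (1 - x) ^ d)
      (hUm k).aemeasurable (hgm c d).aestronglyMeasurable
    rw [hUd k] at h
    exact h.symm
  have hA : ∀ n : ℕ, 1 ≤ n → ∀ p : ℕ → ℝ,
      (∀ k ∈ Finset.Icc 1 n, -1 < p k) →
      (∀ k ∈ Finset.Icc 1 n, -1 < ∑ i ∈ Finset.Icc (k+1) n, p i) →
      ∫ ω, ∏ k ∈ Finset.Icc 1 n, stick T (fun j => U j ω) k ^ p k ∂μ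
        = T ^ (∑ k ∈ Finset.Icc 1 n, p k) *
            ∏ k ∈ Finset.Icc 1 n, betaFn (1 + p k) (1 + ∑ i ∈ Finset.Icc (k+1) n, p i) := by
    intro n hn p hp hq
    have hptw : ∀ᵐ ω ∂μ, ∏ k ∈ Finset.Icc 1 n, stick T (fun j => U j ω) k ^ p k
        = T ^ (∑ k ∈ Finset.Icc 1 n, p k) *
          ∏ k ∈ Finset.Icc 1 n,
            ((U k ω) ^ (∑ i ∈ Finset.Icc (k+1) n, p i) * (1 - U k ω) ^ p k) := by
      filter_upwards [hae] with ω hω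
      exact stick_prod_eq T hT _ hω n p
    rw [integral_congr_ae hptw, integral_const_mul]
    congr 1
    have hindp := integral_indep_prod μ
      (fun k ω => (U k ω) ^ (∑ i ∈ Finset.Icc (k+1) n, p i) * (1 - U k ω) ^ p k)
      (fun k => (hgm _ _).comp (hUm k))
      (hUi.comp (fun k x => x ^ (∑ i ∈ Finset.Icc (k+1) n, p i) * (1 - x) ^ p k)
        (fun k => hgm _ _))
      (Finset.Icc 1 n)
    rw [hindp]
    refine Finset.prod_congr rfl fun k hk => ?_
    rw [hint, beta_integral_real _ _ (hq k hk) (hp k hk), betaFn_symm]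
  refine ⟨hA, ?_⟩
  intro k hk p hp
  set p' : ℕ → ℝ := fun i => if i = k then p else 0 with hp'def
  have hqsum : ∀ j, j < k → ∑ i ∈ Finset.Icc (j+1) k, p' i = p := by
    intro j hj
    rw [Finset.sum_eq_single_of_mem k (Finset.mem_Icc.mpr ⟨hj, le_refl k⟩)
      (fun i _ hik => by simp [hp'def, hik])]
    simp [hp'def]
  have hqk : ∑ i ∈ Finset.Icc (k+1) k, p' i = 0 := by
    rw [Finset.Icc_eq_empty (by omega)]; simp
  have h1 := hA k hk p'
    (by
      intro j _
      by_cases h : j = k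
      · simp only [hp'def, if_pos h]; linarith
      · simp only [hp'def, if_neg h]; linarith)
    (by
      intro j hj
      rcases Finset.mem_Icc.mp hj with ⟨_, hjk⟩
      rcases eq_or_lt_of_le hjk with h | h
      · rw [h, hqk]; norm_num
      · rw [hqsum j h]; exact hp)
  have hlhs : ∀ ω, ∏ j ∈ Finset.Icc 1 k, stick T (fun i => U i ω) j ^ p' j
      = stick T (fun i => U i ω) k ^ p := by
    intro ω
    rw [Finset.prod_eq_single_of_mem k (Finset.mem_Icc.mpr ⟨hk, le_refl k⟩)
      (fun j _ hjk => by simp [hp'def, hjk, Real.rpow_zero])]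
    simp [hp'def]
  have hsum : ∑ j ∈ Finset.Icc 1 k, p' j = p := by
    rw [Finset.sum_eq_single_of_mem k (Finset.mem_Icc.mpr ⟨hk, le_refl k⟩)
      (fun i _ hik => by simp [hp'def, hik])]
    simp [hp'def]
  have hbeta : ∀ j ∈ Finset.Icc 1 k,
      betaFn (1 + p' j) (1 + ∑ i ∈ Finset.Icc (j+1) k, p' i) = (1 + p)⁻¹ := by
    intro j hj
    rcases Finset.mem_Icc.mp hj with ⟨_, hjk⟩
    rcases eq_or_lt_of_le hjk with h | h
    · rw [h, hqk]
      simp only [hp'def, if_pos rfl, add_zero]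
      rw [betaFn_symm, betaFn_one _ (by linarith)]
    · rw [hqsum j h]
      simp only [hp'def, if_neg (Nat.ne_of_lt h), add_zero]
      rw [betaFn_one _ (by linarith)]
  calc ∫ ω, stick T (fun j => U j ω) k ^ p ∂μ
      = ∫ ω, ∏ j ∈ Finset.Icc 1 k, stick T (fun i => U i ω) j ^ p' j ∂μ := by
        apply integral_congr_ae
        filter_upwards with ω
        rw [hlhs]
    _ = T ^ (∑ j ∈ Finset.Icc 1 k, p' j) *
          ∏ j ∈ Finset.Icc 1 k, betaFn (1 + p' j) (1 + ∑ i ∈ Finset.Icc (j+1) k, p' i) := h1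
    _ = T ^ p * (1 + p) ^ (-(k:ℝ)) := by
        rw [hsum, Finset.prod_congr rfl hbeta, Finset.prod_const, Nat.card_Icc]
        congr 1
        rw [Real.rpow_neg (by linarith), Real.rpow_natCast, ← inv_pow]
        norm_num
end
end

section
/- Let p, q, r ≥ 0 and define θ := (1 + r + max{p,q}) / (1 + r + p + q) ≤ 1. Then there exists a constant C > 0 such that for all 1 ≤ j ≤ k ≤ n and all T > 0: E[ ℓ_j^p · ℓ_k^q · ℓ_n^r ] ≤ C·T^{p+q+r}·θ^{j+k}·(1+r)^{−n}. -/
open MeasureTheory ProbabilityTheory Real Finset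

noncomputable section

variable {Ω : Type*}

/-! ### Auxiliary lemmas -/

/-- the exponent profile used to bound the mixed moment. -/
def eFn (p q r : ℝ) (j k n : ℕ) (i : ℕ) : ℝ :=
  (if i < j then p else 0) + (if i < k then q else 0) + (if i < n then r else 0)

lemma eFn_nonneg {p q r : ℝ} (hp : 0 ≤ p) (hq : 0 ≤ q) (hr : 0 ≤ r) (j k n i : ℕ) :
    0 ≤ eFn p q r j k n i := by
  unfold eFn; split_ifs <;> linarith

lemma lintegral_prod_iIndep [MeasurableSpace Ω] {μ : Measure Ω}
    [IsProbabilityMeasure μ] {V : ℕ → Ω → ENNReal}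
    (h : iIndepFun V μ) (hm : ∀ i, Measurable (V i)) (s : Finset ℕ) :
    ∫⁻ ω, ∏ i ∈ s, V i ω ∂μ = ∏ i ∈ s, ∫⁻ ω, V i ω ∂μ := by
  classical
  induction s using Finset.induction with
  | empty => simp
  | insert a s ha ih =>
    have hind : IndepFun (∏ j ∈ s, V j) (V a) μ :=
      h.indepFun_finsetProd_of_notMem hm ha
    have hmp : Measurable (∏ j ∈ s, V j) := by
      have : Measurable fun ω => ∏ j ∈ s, V j ω := Finset.measurable_prod s fun i _ => hm i
      have he : (∏ j ∈ s, V j) = fun ω => ∏ j ∈ s, V j ω := funext fun ω => Finset.prod_apply ω s V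
      rw [he]; exact this
    have := lintegral_mul_eq_lintegral_mul_lintegral_of_indepFun hmp (hm a) hind
    rw [Finset.prod_insert ha]
    calc ∫⁻ ω, ∏ i ∈ insert a s, V i ω ∂μ
        = ∫⁻ ω, ((∏ j ∈ s, V j) * V a) ω ∂μ := by
          apply lintegral_congr fun ω => ?_
          simp [Finset.prod_insert ha, mul_comm]
      _ = (∫⁻ ω, (∏ j ∈ s, V j) ω ∂μ) * ∫⁻ ω, V a ω ∂μ := this
      _ = (∫⁻ ω, V a ω ∂μ) * ∏ i ∈ s, ∫⁻ ω, V i ω ∂μ := by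
          rw [mul_comm]; congr 1
          rw [← ih]; apply lintegral_congr fun ω => ?_; simp

lemma unif_moment (c : ℝ) (hc : 0 ≤ c) :
    ∫⁻ x, ENNReal.ofReal (x ^ c) ∂unif01 = ENNReal.ofReal (1/(c+1)) := by
  have hint : IntegrableOn (fun x : ℝ => x ^ c) (Set.Ioo 0 1) := by
    have := (intervalIntegral.intervalIntegrable_rpow (μ := volume) (r := c) (a := 0) (b := 1)
      (Or.inl hc))
    rw [intervalIntegrable_iff_integrableOn_Ioc_of_le (by norm_num)] at this
    exact this.mono_set Set.Ioo_subset_Ioc_self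
  rw [unif01, ← ofReal_integral_eq_lintegral_ofReal hint]
  · congr 1
    rw [← integral_Ioc_eq_integral_Ioo, ← intervalIntegral.integral_of_le (by norm_num : (0:ℝ) ≤ 1),
      integral_rpow (Or.inl (by linarith : (-1:ℝ) < c))]
    rw [Real.one_rpow, Real.zero_rpow (by linarith : c + 1 ≠ 0)]
    ring
  · filter_upwards [ae_restrict_mem measurableSet_Ioo] with x hx
    exact Real.rpow_nonneg hx.1.le c

lemma stick_eq (T : ℝ) (x : ℕ → ℝ) {m : ℕ} (hm : 1 ≤ m) :
    stick T x m = T * (∏ i ∈ Finset.Icc 1 (m-1), x i) * (1 - x m) := by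
  unfold stick Lrem
  have h1 : Finset.Icc 1 m = Finset.Icc 1 (m-1+1) := by rw [Nat.sub_add_cancel hm]
  rw [h1, Finset.prod_Icc_succ_top (by omega), Nat.sub_add_cancel hm]
  ring

lemma stick_rpow_le (T : ℝ) (hT : 0 < T) (x : ℕ → ℝ) (hx : ∀ i, x i ∈ Set.Ioo (0:ℝ) 1)
    {m n : ℕ} (hm : 1 ≤ m) (hmn : m ≤ n) {c : ℝ} (hc : 0 ≤ c) :
    stick T x m ^ c ≤ T ^ c * ∏ i ∈ Finset.Icc 1 n, x i ^ (if i < m then c else 0) := by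
  have hP : (0:ℝ) < ∏ i ∈ Finset.Icc 1 (m-1), x i := Finset.prod_pos fun i _ => (hx i).1
  have h0 : 0 ≤ stick T x m := by
    rw [stick_eq T x hm]
    have := (hx m).2
    apply mul_nonneg (by positivity) (by linarith)
  have h1 : stick T x m ≤ T * ∏ i ∈ Finset.Icc 1 (m-1), x i := by
    rw [stick_eq T x hm]
    nlinarith [(hx m).1, mul_pos hT hP]
  calc stick T x m ^ c ≤ (T * ∏ i ∈ Finset.Icc 1 (m-1), x i) ^ c :=
        Real.rpow_le_rpow h0 h1 hc
    _ = T ^ c * (∏ i ∈ Finset.Icc 1 (m-1), x i) ^ c := Real.mul_rpow hT.le hP.le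
    _ = T ^ c * ∏ i ∈ Finset.Icc 1 (m-1), x i ^ c := by
        rw [Real.finset_prod_rpow _ _ (fun i _ => (hx i).1.le)]
    _ = T ^ c * ∏ i ∈ Finset.Icc 1 (m-1), x i ^ (if i < m then c else 0) := by
        congr 1
        exact Finset.prod_congr rfl fun i hi => by
          simp only [Finset.mem_Icc] at hi
          rw [if_pos (by omega)]
    _ = T ^ c * ∏ i ∈ Finset.Icc 1 n, x i ^ (if i < m then c else 0) := by
        congr 1
        apply Finset.prod_subset (Finset.Icc_subset_Icc_right (by omega))
        intro i hi his
        simp only [Finset.mem_Icc] at hi his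
        rw [if_neg (by omega), Real.rpow_zero]

lemma stick_nonneg (T : ℝ) (hT : 0 < T) (x : ℕ → ℝ) (hx : ∀ i, x i ∈ Set.Ioo (0:ℝ) 1)
    {m : ℕ} (hm : 1 ≤ m) : 0 ≤ stick T x m := by
  rw [stick_eq T x hm]
  have h2 := (hx m).2
  have hP : (0:ℝ) < ∏ i ∈ Finset.Icc 1 (m-1), x i := Finset.prod_pos fun i _ => (hx i).1
  apply mul_nonneg (by positivity) (by linarith)

lemma triple_le (T : ℝ) (hT : 0 < T) (x : ℕ → ℝ) (hx : ∀ i, x i ∈ Set.Ioo (0:ℝ) 1)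
    {p q r : ℝ} (hp : 0 ≤ p) (hq : 0 ≤ q) (hr : 0 ≤ r)
    {j k n : ℕ} (hj : 1 ≤ j) (hjk : j ≤ k) (hkn : k ≤ n) :
    stick T x j ^ p * stick T x k ^ q * stick T x n ^ r ≤
      T ^ (p+q+r) * ∏ i ∈ Finset.Icc 1 n, x i ^ (eFn p q r j k n i) := by
  have hA := stick_rpow_le T hT x hx hj (hjk.trans hkn) hp
  have hB := stick_rpow_le T hT x hx (hj.trans hjk) hkn hq
  have hC := stick_rpow_le T hT x hx ((hj.trans hjk).trans hkn) le_rfl hr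
  have nnj : 0 ≤ stick T x j ^ p := Real.rpow_nonneg (stick_nonneg T hT x hx hj) p
  have nnk : 0 ≤ stick T x k ^ q := Real.rpow_nonneg (stick_nonneg T hT x hx (hj.trans hjk)) q
  have nnn : 0 ≤ stick T x n ^ r :=
    Real.rpow_nonneg (stick_nonneg T hT x hx ((hj.trans hjk).trans hkn)) r
  have nnB1 : (0:ℝ) ≤ T ^ p * ∏ i ∈ Finset.Icc 1 n, x i ^ (if i < j then p else 0) := by
    apply mul_nonneg (Real.rpow_nonneg hT.le p)
    exact Finset.prod_nonneg fun i _ => Real.rpow_nonneg (hx i).1.le _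
  have nnB2 : (0:ℝ) ≤ T ^ q * ∏ i ∈ Finset.Icc 1 n, x i ^ (if i < k then q else 0) := by
    apply mul_nonneg (Real.rpow_nonneg hT.le q)
    exact Finset.prod_nonneg fun i _ => Real.rpow_nonneg (hx i).1.le _
  calc stick T x j ^ p * stick T x k ^ q * stick T x n ^ r
      ≤ (T ^ p * ∏ i ∈ Finset.Icc 1 n, x i ^ (if i < j then p else 0)) *
        (T ^ q * ∏ i ∈ Finset.Icc 1 n, x i ^ (if i < k then q else 0)) *
        (T ^ r * ∏ i ∈ Finset.Icc 1 n, x i ^ (if i < n then r else 0)) := by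
        apply mul_le_mul (mul_le_mul hA hB nnk nnB1) hC nnn (mul_nonneg nnB1 nnB2)
    _ = (T ^ p * T ^ q * T ^ r) *
        ∏ i ∈ Finset.Icc 1 n, (x i ^ (if i < j then p else 0) * x i ^ (if i < k then q else 0) *
          x i ^ (if i < n then r else 0)) := by
        rw [Finset.prod_mul_distrib, Finset.prod_mul_distrib]; ring
    _ = T ^ (p+q+r) * ∏ i ∈ Finset.Icc 1 n, x i ^ (eFn p q r j k n i) := by
        rw [← Real.rpow_add hT, ← Real.rpow_add hT]
        congr 1
        exact Finset.prod_congr rfl fun i _ => by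
          rw [eFn, ← Real.rpow_add (hx i).1, ← Real.rpow_add (hx i).1]

lemma key_real {p q r : ℝ} (hp : 0 ≤ p) (hq : 0 ≤ q) (hr : 0 ≤ r)
    {j k n : ℕ} (hj : 1 ≤ j) (hjk : j ≤ k) (hkn : k ≤ n) :
    ∏ i ∈ Finset.Icc 1 n, (1/(eFn p q r j k n i + 1)) ≤
      (1 + r + p + q) * ((1 + r + max p q) / (1 + r + p + q)) ^ (j+k) * (1 + r) ^ (-(n:ℝ)) := by
  set M := max p q with hM
  have hM0 : 0 ≤ M := le_trans hp (le_max_left p q)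
  set A1 : ℝ := 1 + r + p + q with hA1def
  set A2 : ℝ := 1 + r + q with hA2def
  set A3 : ℝ := 1 + r with hA3def
  have hA1 : 0 < A1 := by rw [hA1def]; linarith
  have hA2 : 0 < A2 := by rw [hA2def]; linarith
  have hA3 : 0 < A3 := by rw [hA3def]; linarith
  set θ : ℝ := (1 + r + M) / A1 with hθdef
  have hθ : 0 < θ := by apply div_pos (by linarith) hA1
  -- evaluate the product
  have hIcc : Finset.Icc 1 n = Finset.Ioc 0 n := by ext i; simp; omega
  have hk1 : 1 ≤ k := hj.trans hjk
  have hn1 : 1 ≤ n := hk1.trans hkn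
  have hprod : ∏ i ∈ Finset.Icc 1 n, (1/(eFn p q r j k n i + 1)) =
      (1/A1)^(j-1) * ((1/A2)^(k-j) * ((1/A3)^(n-k) * 1)) := by
    rw [hIcc,
      ← Finset.prod_Ioc_consecutive _ (by omega : 0 ≤ j-1) (by omega : j-1 ≤ n),
      ← Finset.prod_Ioc_consecutive _ (by omega : j-1 ≤ k-1) (by omega : k-1 ≤ n),
      ← Finset.prod_Ioc_consecutive _ (by omega : k-1 ≤ n-1) (by omega : n-1 ≤ n)]
    congr 1
    · rw [Finset.prod_congr rfl (fun i hi => ?_), Finset.prod_const, Nat.card_Ioc, Nat.sub_zero]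
      simp only [Finset.mem_Ioc] at hi
      rw [eFn, if_pos (by omega), if_pos (by omega), if_pos (by omega), hA1def, hA3def]
      ring_nf
    congr 1
    · rw [Finset.prod_congr rfl (fun i hi => ?_), Finset.prod_const, Nat.card_Ioc,
        (by omega : k - 1 - (j - 1) = k - j)]
      simp only [Finset.mem_Ioc] at hi
      rw [eFn, if_neg (by omega), if_pos (by omega), if_pos (by omega), hA2def, hA3def]
      ring_nf
    congr 1
    · rw [Finset.prod_congr rfl (fun i hi => ?_), Finset.prod_const, Nat.card_Ioc,
        (by omega : n - 1 - (k - 1) = n - k)]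
      simp only [Finset.mem_Ioc] at hi
      rw [eFn, if_neg (by omega), if_neg (by omega), if_pos (by omega), hA3def]
      ring_nf
    · apply Finset.prod_eq_one
      intro i hi
      simp only [Finset.mem_Ioc] at hi
      rw [eFn, if_neg (by omega), if_neg (by omega), if_neg (by omega)]
      norm_num
  rw [hprod, mul_one]
  -- rewrite the rpow
  rw [Real.rpow_neg hA3.le, Real.rpow_natCast]
  -- key scalar inequalities
  have h2 : A2 ≤ θ * A1 := by
    rw [hθdef, div_mul_cancel₀ _ (ne_of_gt hA1)]
    have := le_max_right p q
    rw [hA2def]; linarith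
  have h1 : A3 ≤ θ * A2 := by
    rw [hθdef, div_mul_eq_mul_div, le_div_iff₀ hA1]
    have hpM : p ≤ M := le_max_left p q
    rw [hA1def, hA2def, hA3def]
    nlinarith [mul_nonneg hM0 hq, mul_le_mul_of_nonneg_left hpM (by linarith : (0:ℝ) ≤ 1 + r)]
  have hk2 : A3^k ≤ θ^(j+k) * (A1^j * A2^(k-j)) := by
    calc A3^k ≤ (θ*A2)^k := pow_le_pow_left₀ hA3.le h1 k
      _ = θ^k * (A2^(k-j) * A2^j) := by rw [mul_pow, ← pow_add, (by omega : k - j + j = k)]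
      _ ≤ θ^k * (A2^(k-j) * (θ*A1)^j) := by
          gcongr
      _ = θ^(j+k) * (A1^j * A2^(k-j)) := by rw [mul_pow]; ring
  -- conclude
  simp only [div_pow, one_pow]
  rw [div_mul_div_comm, div_mul_div_comm, one_mul, one_mul, ← div_eq_mul_inv,
    div_le_div_iff₀ (by positivity) (by positivity)]
  have hA1j : A1 * A1^(j-1) = A1^j := by
    rw [← pow_succ', (by omega : j - 1 + 1 = j)]
  have hA3n : A3^n = A3^k * A3^(n-k) := by
    rw [← pow_add, (by omega : k + (n - k) = n)]
  calc 1 * A3^n = A3^k * A3^(n-k) := by rw [one_mul, hA3n]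
    _ ≤ θ^(j+k) * (A1^j * A2^(k-j)) * A3^(n-k) :=
        mul_le_mul_of_nonneg_right hk2 (by positivity)
    _ = A1 * θ^(j+k) * (A1^(j-1) * (A2^(k-j) * A3^(n-k))) := by rw [← hA1j]; ring

/-- **Lemma A.1 (b)**: a uniform bound on the mixed moments `E[ℓ_j^p ℓ_k^q ℓ_n^r]`. -/
theorem stick_breaking_mixed_moment_bound
    {Ω : Type*} [MeasurableSpace Ω] (μ : Measure Ω) [IsProbabilityMeasure μ]
    (U : ℕ → Ω → ℝ) (hU : UHyp μ U)
    (p q r : ℝ) (hp : 0 ≤ p) (hq : 0 ≤ q) (hr : 0 ≤ r) :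
    ∃ C : ℝ, 0 < C ∧ ∀ T : ℝ, 0 < T → ∀ j k n : ℕ, 1 ≤ j → j ≤ k → k ≤ n →
      ∫⁻ ω, ENNReal.ofReal
          (stick T (fun i => U i ω) j ^ p * stick T (fun i => U i ω) k ^ q *
            stick T (fun i => U i ω) n ^ r) ∂μ
        ≤ ENNReal.ofReal (C * T ^ (p+q+r) *
            ((1 + r + max p q) / (1 + r + p + q)) ^ (j+k) * (1 + r) ^ (-(n:ℝ))) := by
  obtain ⟨hUm, hUd, hUi⟩ := hU
  refine ⟨1 + r + p + q, by linarith, ?_⟩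
  intro T hT j k n hj hjk hkn
  have hae : ∀ᵐ ω ∂μ, ∀ i, U i ω ∈ Set.Ioo (0:ℝ) 1 := by
    rw [ae_all_iff]
    intro i
    have h1 : ∀ᵐ x ∂(μ.map (U i)), x ∈ Set.Ioo (0:ℝ) 1 := by
      rw [hUd i]; exact ae_restrict_mem measurableSet_Ioo
    exact (ae_map_iff (hUm i).aemeasurable measurableSet_Ioo).mp h1
  have hgm : ∀ i, Measurable fun y : ℝ => ENNReal.ofReal (y ^ (eFn p q r j k n i)) :=
    fun i => ENNReal.measurable_ofReal.comp (measurable_id'.pow_const _)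
  have hmV : ∀ i, Measurable fun ω => ENNReal.ofReal ((U i ω) ^ (eFn p q r j k n i)) :=
    fun i => (hgm i).comp (hUm i)
  have step1 : ∫⁻ ω, ENNReal.ofReal
          (stick T (fun i => U i ω) j ^ p * stick T (fun i => U i ω) k ^ q *
            stick T (fun i => U i ω) n ^ r) ∂μ ≤
      ∫⁻ ω, ENNReal.ofReal (T ^ (p+q+r)) *
        ∏ i ∈ Finset.Icc 1 n, ENNReal.ofReal ((U i ω) ^ (eFn p q r j k n i)) ∂μ := by
    refine lintegral_mono_ae ?_
    filter_upwards [hae] with ω hω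
    calc ENNReal.ofReal
          (stick T (fun i => U i ω) j ^ p * stick T (fun i => U i ω) k ^ q *
            stick T (fun i => U i ω) n ^ r)
        ≤ ENNReal.ofReal (T ^ (p+q+r) *
            ∏ i ∈ Finset.Icc 1 n, (U i ω) ^ (eFn p q r j k n i)) :=
          ENNReal.ofReal_le_ofReal (triple_le T hT _ hω hp hq hr hj hjk hkn)
      _ = _ := by
          rw [ENNReal.ofReal_mul (Real.rpow_nonneg hT.le _),
            ENNReal.ofReal_prod_of_nonneg (fun i _ => Real.rpow_nonneg (hω i).1.le _)]
  have hVind : iIndepFun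
      (fun i ω => ENNReal.ofReal ((U i ω) ^ (eFn p q r j k n i))) μ :=
    hUi.comp _ hgm
  have step2 : ∫⁻ ω, ENNReal.ofReal (T ^ (p+q+r)) *
        ∏ i ∈ Finset.Icc 1 n, ENNReal.ofReal ((U i ω) ^ (eFn p q r j k n i)) ∂μ =
      ENNReal.ofReal (T ^ (p+q+r)) *
        ∏ i ∈ Finset.Icc 1 n, ENNReal.ofReal (1/(eFn p q r j k n i + 1)) := by
    rw [lintegral_const_mul _ (Finset.measurable_prod _ fun i _ => hmV i),
      lintegral_prod_iIndep hVind hmV]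
    congr 1
    refine Finset.prod_congr rfl fun i _ => ?_
    rw [← MeasureTheory.lintegral_map (hgm i) (hUm i), hUd i,
      unif_moment _ (eFn_nonneg hp hq hr j k n i)]
  refine step1.trans (step2.le.trans ?_)
  rw [← ENNReal.ofReal_prod_of_nonneg (fun i _ => by have := eFn_nonneg hp hq hr j k n i; positivity),
    ← ENNReal.ofReal_mul (Real.rpow_nonneg hT.le _)]
  apply ENNReal.ofReal_le_ofReal
  have hkey := key_real hp hq hr hj hjk hkn
  calc T ^ (p+q+r) * ∏ i ∈ Finset.Icc 1 n, (1/(eFn p q r j k n i + 1))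
      ≤ T ^ (p+q+r) * ((1 + r + p + q) * ((1 + r + max p q) / (1 + r + p + q)) ^ (j+k) *
          (1 + r) ^ (-(n:ℝ))) :=
        mul_le_mul_of_nonneg_left hkey (Real.rpow_nonneg hT.le _)
    _ = (1 + r + p + q) * T ^ (p+q+r) *
          ((1 + r + max p q) / (1 + r + p + q)) ^ (j+k) * (1 + r) ^ (-(n:ℝ)) := by ring
end
end

section
/- Let x_1, x_2, …, y_1, y_2, … ∈ [0,1] and r ∈ [0,1]. Then for every n ≥ 1: (i) ∏_{k=1}^n ((1−r) + r·x_k) ≤ (1−r)^n + Σ_{k=1}^n r·(1−r)^{k−1}·x_k; and (ii) ∏_{k=1}^n ((1−r)·y_k + r·x_k) ≤ r^n + (1−r)^n + Σ_{k=2}^n r·(1−r)^{k−1}·x_k·y_1 + Σ_{k=2}^n (1−r)·r^{k−1}·x_1·y_k. -/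
open Finset

lemma aux_prod (a b : ℝ) (ha : 0 ≤ a) (hb : 0 ≤ b) (hab : a + b ≤ 1)
    (z : ℕ → ℝ) (hz0 : ∀ k, 0 ≤ z k) (hz1 : ∀ k, z k ≤ 1) (n : ℕ) :
    ∏ k ∈ Finset.range n, (a + b * z k)
      ≤ a ^ n + ∑ k ∈ Finset.range n, b * a ^ k * z k := by
  induction n with
  | zero => simp
  | succ n ih =>
    rw [Finset.prod_range_succ, Finset.sum_range_succ, pow_succ]
    have hfz : 0 ≤ a + b * z n := add_nonneg ha (mul_nonneg hb (hz0 n))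
    have hfz1 : a + b * z n ≤ 1 := by nlinarith [hz1 n, hz0 n]
    have hS0 : 0 ≤ ∑ k ∈ Finset.range n, b * a ^ k * z k :=
      Finset.sum_nonneg (fun k _ => mul_nonneg (mul_nonneg hb (pow_nonneg ha k)) (hz0 k))
    have h1 := mul_le_mul_of_nonneg_right ih hfz
    nlinarith [pow_nonneg ha n, hz0 n, hz1 n, mul_le_mul_of_nonneg_left hfz1 hS0]


/-- **Lemma B.1**: deterministic product inequalities for sequences in `[0,1]`. -/
theorem product_inequalities
    (x y : ℕ → ℝ) (hx : ∀ k, x k ∈ Set.Icc (0:ℝ) 1) (hy : ∀ k, y k ∈ Set.Icc (0:ℝ) 1)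
    (r : ℝ) (hr : r ∈ Set.Icc (0:ℝ) 1) (n : ℕ) (hn : 1 ≤ n) :
    (∏ k ∈ Finset.Icc 1 n, ((1 - r) + r * x k)
      ≤ (1 - r) ^ n + ∑ k ∈ Finset.Icc 1 n, r * (1 - r) ^ (k - 1) * x k) ∧
    (∏ k ∈ Finset.Icc 1 n, ((1 - r) * y k + r * x k)
      ≤ r ^ n + (1 - r) ^ n
        + ∑ k ∈ Finset.Icc 2 n, r * (1 - r) ^ (k - 1) * x k * y 1
        + ∑ k ∈ Finset.Icc 2 n, (1 - r) * r ^ (k - 1) * x 1 * y k) := by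
  obtain ⟨hr0, hr1⟩ := hr
  have h1r0 : (0:ℝ) ≤ 1 - r := by linarith
  obtain ⟨m, rfl⟩ : ∃ m, n = m + 1 := ⟨n - 1, by omega⟩
  constructor
  · rw [← Finset.Ico_add_one_right_eq_Icc, Finset.prod_Ico_eq_prod_range, Finset.sum_Ico_eq_sum_range]
    simp only [Nat.add_sub_cancel]
    have hsum : ∑ k ∈ Finset.range (m + 1), r * (1 - r) ^ (1 + k - 1) * x (1 + k)
        = ∑ k ∈ Finset.range (m + 1), r * (1 - r) ^ k * x (1 + k) := by
      refine Finset.sum_congr rfl fun k _ => by rw [show 1 + k - 1 = k by omega]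
    rw [hsum]
    exact aux_prod (1 - r) r h1r0 hr0 (by linarith) (fun k => x (1 + k))
      (fun k => (hx (1 + k)).1) (fun k => (hx (1 + k)).2) (m + 1)
  · -- split off first factor
    rw [← Finset.Ico_add_one_right_eq_Icc]
    rw [Finset.prod_eq_prod_Ico_succ_bot (by omega : 1 < m + 1 + 1)]
    -- tail product bounds
    have hfnn : ∀ k, 0 ≤ (1 - r) * y k + r * x k := fun k =>
      add_nonneg (mul_nonneg h1r0 (hy k).1) (mul_nonneg hr0 (hx k).1)
    have hPx : ∏ k ∈ Finset.Ico 2 (m + 2), ((1 - r) * y k + r * x k)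
        ≤ ∏ k ∈ Finset.Ico 2 (m + 2), ((1 - r) + r * x k) := by
      refine Finset.prod_le_prod (fun k _ => hfnn k) (fun k _ => ?_)
      nlinarith [(hy k).2, (hy k).1]
    have hPy : ∏ k ∈ Finset.Ico 2 (m + 2), ((1 - r) * y k + r * x k)
        ≤ ∏ k ∈ Finset.Ico 2 (m + 2), (r + (1 - r) * y k) := by
      refine Finset.prod_le_prod (fun k _ => hfnn k) (fun k _ => ?_)
      nlinarith [(hx k).2, (hx k).1]
    have hA : ∏ k ∈ Finset.Ico 2 (m + 2), ((1 - r) + r * x k)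
        ≤ (1 - r) ^ m + ∑ k ∈ Finset.range m, r * (1 - r) ^ k * x (2 + k) := by
      rw [Finset.prod_Ico_eq_prod_range]
      simp only [show m + 2 - 2 = m by omega]
      exact aux_prod (1 - r) r h1r0 hr0 (by linarith) (fun k => x (2 + k))
        (fun k => (hx (2 + k)).1) (fun k => (hx (2 + k)).2) m
    have hB : ∏ k ∈ Finset.Ico 2 (m + 2), (r + (1 - r) * y k)
        ≤ r ^ m + ∑ k ∈ Finset.range m, (1 - r) * r ^ k * y (2 + k) := by
      rw [Finset.prod_Ico_eq_prod_range]
      simp only [show m + 2 - 2 = m by omega]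
      exact aux_prod r (1 - r) hr0 h1r0 (by linarith) (fun k => y (2 + k))
        (fun k => (hy (2 + k)).1) (fun k => (hy (2 + k)).2) m
    -- rewrite RHS sums over range m
    have hSx : ∑ k ∈ Finset.Icc 2 (m + 1), r * (1 - r) ^ (k - 1) * x k * y 1
        = ∑ k ∈ Finset.range m, r * (1 - r) ^ (k + 1) * x (2 + k) * y 1 := by
      rw [← Finset.Ico_add_one_right_eq_Icc, Finset.sum_Ico_eq_sum_range]
      simp only [show m + 1 + 1 - 2 = m by omega]
      exact Finset.sum_congr rfl fun k _ => by rw [show 2 + k - 1 = k + 1 by omega]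
    have hSy : ∑ k ∈ Finset.Icc 2 (m + 1), (1 - r) * r ^ (k - 1) * x 1 * y k
        = ∑ k ∈ Finset.range m, (1 - r) * r ^ (k + 1) * x 1 * y (2 + k) := by
      rw [← Finset.Ico_add_one_right_eq_Icc, Finset.sum_Ico_eq_sum_range]
      simp only [show m + 1 + 1 - 2 = m by omega]
      exact Finset.sum_congr rfl fun k _ => by rw [show 2 + k - 1 = k + 1 by omega]
    rw [hSx, hSy]
    have hPnn : 0 ≤ ∏ k ∈ Finset.Ico 2 (m + 2), ((1 - r) * y k + r * x k) :=
      Finset.prod_nonneg fun k _ => hfnn k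
    have hy1 := hy 1
    have hx1 := hx 1
    simp only [Set.mem_Icc] at hy1 hx1
    have key : ((1 - r) * y 1 + r * x 1) * ∏ k ∈ Finset.Ico 2 (m + 2), ((1 - r) * y k + r * x k)
        ≤ (1 - r) * y 1 * ((1 - r) ^ m + ∑ k ∈ Finset.range m, r * (1 - r) ^ k * x (2 + k))
          + r * x 1 * (r ^ m + ∑ k ∈ Finset.range m, (1 - r) * r ^ k * y (2 + k)) := by
      have t1 : (1 - r) * y 1 * ∏ k ∈ Finset.Ico 2 (m + 2), ((1 - r) * y k + r * x k)
          ≤ (1 - r) * y 1 * ((1 - r) ^ m + ∑ k ∈ Finset.range m, r * (1 - r) ^ k * x (2 + k)) :=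
        mul_le_mul_of_nonneg_left (le_trans hPx hA) (mul_nonneg h1r0 hy1.1)
      have t2 : r * x 1 * ∏ k ∈ Finset.Ico 2 (m + 2), ((1 - r) * y k + r * x k)
          ≤ r * x 1 * (r ^ m + ∑ k ∈ Finset.range m, (1 - r) * r ^ k * y (2 + k)) :=
        mul_le_mul_of_nonneg_left (le_trans hPy hB) (mul_nonneg hr0 hx1.1)
      nlinarith [t1, t2]
    refine key.trans ?_
    rw [mul_add, mul_add, Finset.mul_sum, Finset.mul_sum]
    have e1 : ∑ k ∈ Finset.range m, (1 - r) * y 1 * (r * (1 - r) ^ k * x (2 + k))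
        = ∑ k ∈ Finset.range m, r * (1 - r) ^ (k + 1) * x (2 + k) * y 1 :=
      Finset.sum_congr rfl fun k _ => by ring
    have e2 : ∑ k ∈ Finset.range m, r * x 1 * ((1 - r) * r ^ k * y (2 + k))
        = ∑ k ∈ Finset.range m, (1 - r) * r ^ (k + 1) * x 1 * y (2 + k) :=
      Finset.sum_congr rfl fun k _ => by ring
    rw [e1, e2]
    have p1 : (1 - r) * y 1 * (1 - r) ^ m ≤ (1 - r) ^ (m + 1) := by
      rw [pow_succ]
      nlinarith [mul_le_mul_of_nonneg_left hy1.2 (mul_nonneg h1r0 (pow_nonneg h1r0 m))]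
    have p2 : r * x 1 * r ^ m ≤ r ^ (m + 1) := by
      rw [pow_succ]
      nlinarith [mul_le_mul_of_nonneg_left hx1.2 (mul_nonneg hr0 (pow_nonneg hr0 m))]
    linarith
end

section
/- Suppose α ∈ (0,2) with α ≠ 1 and set ζ = 1 − 1/α. For s ≥ 0 define d_s = 2^s·max{1, s^s·e^{−s}, Γ(s+1)} (with the convention 0^0 = 1), and define (c, δ) = (max{1, ∫_0^∞ exp(−y^ζ) dy}, 1/ζ) if α ∈ (1,2), and (c, δ) = ((2 + 1/|ζ|)·max{1, (2e^{−1}/α)^{1/α}}, 1) if α ∈ (0,1). If Y is an exponential random variable with unit mean, then for all s, x ≥ 0: E[Y^s·e^{−x·Y^ζ}] ≤ c·d_s·min{1, x^{−δ}}. -/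
open MeasureTheory Real

noncomputable section

/-- the exponential distribution with unit mean. -/
def expMeasure1 : Measure ℝ :=
  volume.withDensity fun y => ENNReal.ofReal (if 0 ≤ y then Real.exp (-y) else 0)

/-- `d_s = 2^s max{1, s^s e^{-s}, Γ(s+1)}` (with the convention `0^0 = 1`,
as holds for `Real.rpow`). -/
def dconst (s : ℝ) : ℝ := 2 ^ s * max (max 1 (s ^ s * Real.exp (-s))) (Real.Gamma (s + 1))

/-- the pair `(c, δ)` of Lemma B.2 (a), with `ζ = 1 - 1/α`. -/
def cdelta (α : ℝ) : ℝ × ℝ :=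
  if 1 < α then
    (max 1 (∫ y in Set.Ioi (0:ℝ), Real.exp (-(y ^ (1 - 1/α)))), 1 / (1 - 1/α))
  else
    ((2 + 1 / |1 - 1/α|) * max 1 ((2 * Real.exp (-1) / α) ^ (1/α)), 1)

open Set

-- sup lemma
lemma sup_rpow_exp {s c y : ℝ} (hs : 0 ≤ s) (hc : 0 < c) (hy : 0 ≤ y) :
    y ^ s * Real.exp (-(c * y)) ≤ (s / c) ^ s * Real.exp (-s) := by
  rcases eq_or_lt_of_le hs with rfl | hs'
  · simp only [rpow_zero, one_mul, neg_zero, exp_zero]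
    exact exp_le_one_iff.mpr (by nlinarith [mul_nonneg hc.le hy])
  rcases eq_or_lt_of_le hy with rfl | hy'
  · rw [zero_rpow hs'.ne', zero_mul]
    positivity
  rw [rpow_def_of_pos hy', rpow_def_of_pos (div_pos hs' hc), ← exp_add, ← exp_add, exp_le_exp]
  have hpos : 0 < c * y / s := by positivity
  have hlog : Real.log (c * y / s) ≤ c * y / s - 1 := Real.log_le_sub_one_of_pos hpos
  have hexp : Real.log (c * y / s) = Real.log c + Real.log y - Real.log s := by
    rw [Real.log_div (by positivity) hs'.ne', Real.log_mul hc.ne' hy'.ne']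
  have hsc : Real.log (s / c) = Real.log s - Real.log c := Real.log_div hs'.ne' hc.ne'
  have key := mul_le_mul_of_nonneg_left hlog hs
  have hcan : s * (c * y / s - 1) = c * y - s := by field_simp
  nlinarith [key, hcan, hexp, hsc]

lemma exp_neg_le_inv {t : ℝ} (ht : 0 < t) : Real.exp (-t) ≤ Real.exp (-1) * t⁻¹ := by
  rw [Real.exp_neg, Real.exp_neg, ← mul_inv]
  have h1 : Real.exp 1 * t ≤ Real.exp t := by
    have h := Real.add_one_le_exp (t - 1)
    have h2 : Real.exp (t - 1) * Real.exp 1 = Real.exp t := by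
      rw [← Real.exp_add]; ring_nf
    nlinarith [Real.exp_pos (1 : ℝ), Real.exp_pos (t - 1)]
  exact inv_anti₀ (by positivity) h1

lemma int_val_lin {q b : ℝ} (hq : -1 < q) (hb : 0 < b) :
    ∫ y in Ioi (0:ℝ), y ^ q * Real.exp (-(b * y)) = b ^ (-(q+1)) * Real.Gamma (q+1) := by
  calc ∫ y in Ioi (0:ℝ), y ^ q * Real.exp (-(b * y))
      = ∫ y in Ioi (0:ℝ), y ^ q * Real.exp (-b * y ^ (1:ℝ)) := by
        refine setIntegral_congr_fun measurableSet_Ioi fun y hy => by rw [rpow_one, neg_mul]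
    _ = b ^ (-(q+1)/1) * (1/1) * Real.Gamma ((q+1)/1) :=
        integral_rpow_mul_exp_neg_mul_rpow one_pos hq hb
    _ = b ^ (-(q+1)) * Real.Gamma (q+1) := by norm_num

lemma int_on_lin {q b : ℝ} (hq : -1 < q) (hb : 0 < b) :
    IntegrableOn (fun y : ℝ => y ^ q * Real.exp (-(b * y))) (Ioi 0) := by
  have h := integrableOn_rpow_mul_exp_neg_mul_rpow (p := 1) hq one_pos hb
  exact h.congr_fun (fun y hy => by dsimp only; rw [rpow_one, neg_mul]) measurableSet_Ioi

lemma int_val_exp {p b : ℝ} (hp : 0 < p) (hb : 0 < b) :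
    ∫ y in Ioi (0:ℝ), Real.exp (-(b * y ^ p)) = b ^ (-1/p) * Real.Gamma (1/p + 1) := by
  rw [← integral_exp_neg_mul_rpow hp hb]
  exact setIntegral_congr_fun measurableSet_Ioi fun y hy => by rw [neg_mul]

lemma int_on_exp {p b : ℝ} (hp : 0 < p) (hb : 0 < b) :
    IntegrableOn (fun y : ℝ => Real.exp (-(b * y ^ p))) (Ioi 0) := by
  have h1 : IntegrableOn (fun y : ℝ => y ^ ((0+1)/p - 1) * Real.exp (-(b * y))) (Ioi 0) :=
    int_on_lin (by rw [zero_add]; simpa using (by positivity : (0:ℝ) < 1/p)) hb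
  have h2 := (integrableOn_Ioi_comp_rpow_iff' (fun y : ℝ => y ^ ((0+1)/p - 1) * Real.exp (-(b * y))) hp.ne').mpr h1
  refine h2.congr_fun (fun y hy => ?_) measurableSet_Ioi
  have hy' : (0:ℝ) < y := hy
  dsimp only
  rw [smul_eq_mul, ← Real.rpow_mul hy'.le, ← mul_assoc, ← Real.rpow_add hy']
  have he : p - 1 + p * ((0+1)/p - 1) = 0 := by field_simp; ring
  rw [he, Real.rpow_zero, one_mul]

lemma lint_compare {f g : ℝ → ℝ} {B : ℝ} (hg : IntegrableOn g (Ioi 0))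
    (h0 : ∀ y ∈ Ioi (0:ℝ), 0 ≤ g y) (hfg : ∀ y ∈ Ioi (0:ℝ), f y ≤ g y)
    (hB : ∫ y in Ioi (0:ℝ), g y ≤ B) :
    ∫⁻ y in Ioi (0:ℝ), ENNReal.ofReal (f y) ≤ ENNReal.ofReal B := by
  calc ∫⁻ y in Ioi (0:ℝ), ENNReal.ofReal (f y)
      ≤ ∫⁻ y in Ioi (0:ℝ), ENNReal.ofReal (g y) :=
        setLIntegral_mono' measurableSet_Ioi fun y hy => ENNReal.ofReal_le_ofReal (hfg y hy)
    _ = ENNReal.ofReal (∫ y in Ioi (0:ℝ), g y) :=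
        (ofReal_integral_eq_lintegral_ofReal hg
          ((ae_restrict_mem measurableSet_Ioi).mono h0)).symm
    _ ≤ ENNReal.ofReal B := ENNReal.ofReal_le_ofReal hB

lemma reduction {Ω : Type*} [MeasurableSpace Ω] (μ : Measure Ω) (Y : Ω → ℝ)
    (hYm : Measurable Y) (hYd : μ.map Y = expMeasure1) (f : ℝ → ℝ) (hf : Measurable f) :
    ∫⁻ ω, ENNReal.ofReal (f (Y ω)) ∂μ
      = ∫⁻ y in Ioi (0:ℝ), ENNReal.ofReal (f y * Real.exp (-y)) := by
  have hg : Measurable fun y => ENNReal.ofReal (f y) := hf.ennreal_ofReal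
  have hdens : Measurable fun y : ℝ => ENNReal.ofReal (if 0 ≤ y then Real.exp (-y) else 0) :=
    (Measurable.ite measurableSet_Ici (Real.measurable_exp.comp measurable_neg)
      measurable_const).ennreal_ofReal
  rw [← lintegral_map hg hYm, hYd, expMeasure1,
    lintegral_withDensity_eq_lintegral_mul _ hdens hg,
    ← lintegral_indicator measurableSet_Ioi]
  refine lintegral_congr_ae ?_
  have h0 : ∀ᵐ y : ℝ, y ≠ 0 := by
    refine (ae_iff.mpr ?_); simpa using measure_singleton (0:ℝ)
  filter_upwards [h0] with y hy0
  rcases lt_or_gt_of_ne hy0 with hneg | hpos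
  · simp [Set.indicator_of_notMem (fun h => absurd (mem_Ioi.mp h) (not_lt.mpr hneg.le)),
      if_neg (not_le.mpr hneg)]
  · rw [Set.indicator_of_mem (mem_Ioi.mpr hpos), Pi.mul_apply, if_pos hpos.le,
      ← ENNReal.ofReal_mul (Real.exp_nonneg _), mul_comm]

set_option maxHeartbeats 1000000 in
/-- **Lemma B.2 (a)**: `E[Y^s e^{-x Y^ζ}] ≤ c d_s min{1, x^{-δ}}` for a unit-mean
exponential random variable `Y` (the two bounds together express the bound by the
minimum, with the convention `x^{-δ} = ∞` at `x = 0`). -/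
theorem exponential_moment_laplace_bound
    {Ω : Type*} [MeasurableSpace Ω] (μ : Measure Ω) [IsProbabilityMeasure μ]
    (Y : Ω → ℝ) (hYm : Measurable Y) (hYd : μ.map Y = expMeasure1)
    (α : ℝ) (hα0 : 0 < α) (hα2 : α < 2) (hα1 : α ≠ 1) :
    ∀ s x : ℝ, 0 ≤ s → 0 ≤ x →
      (∫⁻ ω, ENNReal.ofReal (Y ω ^ s * Real.exp (-(x * Y ω ^ (1 - 1/α)))) ∂μ
          ≤ ENNReal.ofReal ((cdelta α).1 * dconst s)) ∧
      (0 < x →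
        ∫⁻ ω, ENNReal.ofReal (Y ω ^ s * Real.exp (-(x * Y ω ^ (1 - 1/α)))) ∂μ
          ≤ ENNReal.ofReal ((cdelta α).1 * dconst s * x ^ (-(cdelta α).2))) := by
  intro s x hs hx
  have hζ0 : (1 : ℝ) - 1/α ≠ 0 := by
    intro h
    have : 1/α = 1 := by linarith
    exact hα1 (by field_simp at this; linarith)
  have hmf : Measurable fun y : ℝ => y ^ s * Real.exp (-(x * y ^ (1 - 1/α))) := by fun_prop
  have hred := reduction μ Y hYm hYd (fun y => y ^ s * Real.exp (-(x * y ^ (1 - 1/α)))) hmf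
  have hΓpos : 0 < Real.Gamma (s + 1) := Real.Gamma_pos_of_pos (by linarith)
  have h2s : (1:ℝ) ≤ 2 ^ s := Real.one_le_rpow one_le_two hs
  have hss : (0:ℝ) ≤ s ^ s * Real.exp (-s) := by positivity
  have hmax1 : (1:ℝ) ≤ max (max 1 (s ^ s * Real.exp (-s))) (Real.Gamma (s + 1)) :=
    le_trans (le_max_left _ _) (le_max_left _ _)
  have hd0 : 0 < dconst s := by
    rw [dconst]; nlinarith
  have hdΓ : Real.Gamma (s+1) ≤ dconst s := by
    rw [dconst]
    nlinarith [le_max_right (max 1 (s ^ s * Real.exp (-s))) (Real.Gamma (s+1))]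
  have hdM : s ^ s * Real.exp (-s) ≤ dconst s := by
    rw [dconst]
    nlinarith [le_trans (le_max_right 1 (s ^ s * Real.exp (-s))) (le_max_left
      (max 1 (s ^ s * Real.exp (-s))) (Real.Gamma (s+1)))]
  have hsd : 2 ^ s * Real.Gamma (s+1) ≤ dconst s := by
    rw [dconst]
    nlinarith [le_max_right (max 1 (s ^ s * Real.exp (-s))) (Real.Gamma (s+1)),
      Real.rpow_pos_of_pos two_pos s]
  have hc1 : 1 ≤ (cdelta α).1 := by
    by_cases hA : 1 < α
    · simp only [cdelta, if_pos hA]; exact le_max_left _ _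
    · simp only [cdelta, if_neg hA]
      have h1 : (0:ℝ) < |1 - 1/α| := abs_pos.mpr hζ0
      have h2 : (1:ℝ) ≤ max 1 ((2 * Real.exp (-1) / α) ^ (1/α)) := le_max_left _ _
      nlinarith [div_nonneg one_pos.le h1.le]
  constructor
  · rw [hred]
    refine lint_compare (int_on_lin (by linarith : (-1:ℝ) < s) one_pos)
      (fun y hy => mul_nonneg (Real.rpow_nonneg (le_of_lt hy) s) (Real.exp_nonneg _))
      (fun y hy => ?_) ?_
    · have hy' : (0:ℝ) < y := hy
      have h1 : Real.exp (-(x * y ^ (1 - 1/α))) ≤ 1 :=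
        Real.exp_le_one_iff.mpr (by nlinarith [Real.rpow_nonneg hy'.le (1 - 1/α)])
      rw [one_mul]
      nlinarith [mul_le_mul_of_nonneg_left h1
        (mul_nonneg (Real.rpow_nonneg hy'.le s) (Real.exp_nonneg (-y)))]
    · rw [int_val_lin (by linarith) one_pos, Real.one_rpow, one_mul]
      nlinarith
  · intro hxpos
    rw [hred]
    by_cases hA : 1 < α
    · -- case 1 < α : ζ > 0
      have hζpos : 0 < 1 - 1/α := by
        have h1 : 1/α < 1 := (div_lt_one hα0).mpr hA
        linarith
      have hcA : (cdelta α).1 = max 1 (Real.Gamma (1/(1 - 1/α) + 1)) := by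
        simp only [cdelta, if_pos hA, integral_exp_neg_rpow hζpos]
      have hδA : (cdelta α).2 = 1/(1 - 1/α) := by simp only [cdelta, if_pos hA]
      rw [hδA, hcA]
      set M := (s / 1) ^ s * Real.exp (-s) with hM
      have hM0 : 0 ≤ M := by rw [hM]; positivity
      refine lint_compare ((int_on_exp hζpos hxpos).const_mul M)
        (fun y hy => mul_nonneg hM0 (Real.exp_nonneg _)) (fun y hy => ?_) ?_
      · have hy' : (0:ℝ) < y := hy
        have hsup := sup_rpow_exp hs one_pos hy'.le
        rw [one_mul] at hsup
        rw [hM]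
        nlinarith [mul_le_mul_of_nonneg_left hsup (Real.exp_nonneg (-(x * y ^ (1 - 1/α))))]
      · rw [MeasureTheory.integral_const_mul, int_val_exp hζpos hxpos]
        have hΓ2 : 0 < Real.Gamma (1/(1 - 1/α) + 1) := Real.Gamma_pos_of_pos (by positivity)
        have hMd : M ≤ dconst s := by rw [hM, div_one]; exact hdM
        have hΓc : Real.Gamma (1/(1 - 1/α) + 1) ≤ max 1 (Real.Gamma (1/(1 - 1/α) + 1)) :=
          le_max_right _ _
        have hx0 : (0:ℝ) ≤ x ^ (-(1/(1 - 1/α))) := Real.rpow_nonneg hx _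
        have hnd : -1/(1 - 1/α) = -(1/(1 - 1/α)) := by ring
        rw [hnd]
        have key : M * Real.Gamma (1/(1 - 1/α) + 1)
            ≤ max 1 (Real.Gamma (1/(1 - 1/α) + 1)) * dconst s := by
          nlinarith [mul_le_mul hMd hΓc hΓ2.le hd0.le]
        nlinarith [mul_le_mul_of_nonneg_right key hx0]
    · -- case α < 1 : ζ < 0
      have hαlt : α < 1 := lt_of_le_of_ne (le_of_not_gt hA) hα1
      have hinv : 1 < 1/α := (one_lt_div hα0).mpr hαlt
      set β : ℝ := 1/α - 1 with hβ
      have hβpos : 0 < β := by rw [hβ]; linarith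
      have habs : |1 - 1/α| = β := by rw [abs_of_neg (by linarith : (1:ℝ) - 1/α < 0)]; rw [hβ]; ring
      set Mx := max 1 ((2 * Real.exp (-1) / α) ^ (1/α)) with hMx
      have hcB : (cdelta α).1 = (2 + 1/β) * Mx := by
        simp only [cdelta, if_neg hA, habs, hMx]
      have hδB : (cdelta α).2 = 1 := by simp only [cdelta, if_neg hA]
      rw [hδB, hcB]
      set K := Real.exp (-1) * x⁻¹ * ((β / 2⁻¹) ^ β * Real.exp (-β)) with hK
      have hK0 : 0 ≤ K := by
        rw [hK]
        exact mul_nonneg (mul_nonneg (Real.exp_nonneg _) (inv_nonneg.mpr hx))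
          (mul_nonneg (Real.rpow_nonneg (div_nonneg hβpos.le (by norm_num)) _)
            (Real.exp_nonneg _))
      refine lint_compare ((int_on_lin (by linarith : (-1:ℝ) < s)
        (by norm_num : (0:ℝ) < 2⁻¹)).const_mul K)
        (fun y hy => mul_nonneg hK0 (mul_nonneg (Real.rpow_nonneg (le_of_lt hy) s)
          (Real.exp_nonneg _))) (fun y hy => ?_) ?_
      · have hy' : (0:ℝ) < y := hy
        have hyζ : 0 < y ^ (1 - 1/α) := Real.rpow_pos_of_pos hy' _
        have h1 : Real.exp (-(x * y ^ (1 - 1/α))) ≤ Real.exp (-1) * (x * y ^ (1 - 1/α))⁻¹ :=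
          exp_neg_le_inv (by positivity)
        have h2 : (x * y ^ (1 - 1/α))⁻¹ = x⁻¹ * y ^ β := by
          rw [mul_inv, ← Real.rpow_neg hy'.le]
          congr 2
          rw [hβ]; ring
        rw [h2] at h1
        have h3 : Real.exp (-y) = Real.exp (-(2⁻¹ * y)) * Real.exp (-(2⁻¹ * y)) := by
          rw [← Real.exp_add]; ring_nf
        have h4 : y ^ β * Real.exp (-(2⁻¹ * y)) ≤ (β / 2⁻¹) ^ β * Real.exp (-β) :=
          sup_rpow_exp hβpos.le (by norm_num) hy'.le
        calc y ^ s * Real.exp (-(x * y ^ (1 - 1/α))) * Real.exp (-y)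
            ≤ y ^ s * (Real.exp (-1) * (x⁻¹ * y ^ β)) * Real.exp (-y) := by
              have hnn : 0 ≤ y ^ s * Real.exp (-y) :=
                mul_nonneg (Real.rpow_nonneg hy'.le s) (Real.exp_nonneg _)
              nlinarith [mul_le_mul_of_nonneg_left h1 hnn]
          _ = (Real.exp (-1) * x⁻¹) * (y ^ β * Real.exp (-(2⁻¹ * y)))
                * (y ^ s * Real.exp (-(2⁻¹ * y))) := by rw [h3]; ring
          _ ≤ (Real.exp (-1) * x⁻¹) * ((β / 2⁻¹) ^ β * Real.exp (-β))
                * (y ^ s * Real.exp (-(2⁻¹ * y))) := by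
              have hnn1 : 0 ≤ Real.exp (-1:ℝ) * x⁻¹ :=
                mul_nonneg (Real.exp_nonneg _) (inv_nonneg.mpr hx)
              have hnn2 : 0 ≤ y ^ s * Real.exp (-(2⁻¹ * y)) :=
                mul_nonneg (Real.rpow_nonneg hy'.le s) (Real.exp_nonneg _)
              exact mul_le_mul_of_nonneg_right (mul_le_mul_of_nonneg_left h4 hnn1) hnn2
          _ = K * (y ^ s * Real.exp (-(2⁻¹ * y))) := by rw [hK]
      · rw [MeasureTheory.integral_const_mul, int_val_lin (by linarith)
          (by norm_num : (0:ℝ) < 2⁻¹), Real.rpow_neg_one]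
        have h2inv : ((2:ℝ)⁻¹) ^ (-(s+1)) = 2 * 2 ^ s := by
          rw [Real.inv_rpow (by norm_num : (0:ℝ) ≤ 2), Real.rpow_neg (by norm_num : (0:ℝ) ≤ 2),
            inv_inv, Real.rpow_add two_pos, Real.rpow_one]
          ring
        have hMx1 : (1:ℝ) ≤ Mx := le_max_left _ _
        have hA' : (β / 2⁻¹) ^ β * Real.exp (-β) ≤ Mx := by
          have hstep : (β / 2⁻¹) ^ β * Real.exp (-β) = (2 * β * Real.exp (-1)) ^ β := by
            rw [show β / 2⁻¹ = 2 * β by rw [div_inv_eq_mul]; ring,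
              Real.mul_rpow (by positivity) (Real.exp_nonneg _), ← Real.exp_mul]
            norm_num
          rw [hstep]
          rcases le_or_gt (2 * β * Real.exp (-1)) 1 with hle | hgt
          · exact le_trans (Real.rpow_le_one (by positivity) hle hβpos.le) hMx1
          · have hβα : β ≤ 1/α := by rw [hβ]; linarith
            have hAB : 2 * β * Real.exp (-1) ≤ 2 * Real.exp (-1) / α := by
              have hexp : 2 * β * Real.exp (-1)
                  = 2 * Real.exp (-1) / α - 2 * Real.exp (-1) := by rw [hβ]; ring
              rw [hexp]
              nlinarith [Real.exp_pos (-1:ℝ)]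
            calc (2 * β * Real.exp (-1)) ^ β
                ≤ (2 * Real.exp (-1) / α) ^ β :=
                  Real.rpow_le_rpow (by positivity) hAB hβpos.le
              _ ≤ (2 * Real.exp (-1) / α) ^ (1/α) :=
                  Real.rpow_le_rpow_of_exponent_le (le_trans hgt.le hAB) hβα
              _ ≤ Mx := le_max_right _ _
        have he1 : Real.exp (-1:ℝ) ≤ 1 := Real.exp_le_one_iff.mpr (by norm_num)
        have h1β : (0:ℝ) ≤ 1/β := by positivity
        have hMx0 : (0:ℝ) ≤ Mx := le_trans zero_le_one hMx1
        have hsup0 : (0:ℝ) ≤ (β / 2⁻¹) ^ β * Real.exp (-β) :=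
          mul_nonneg (Real.rpow_nonneg (div_nonneg hβpos.le (by norm_num)) _) (Real.exp_nonneg _)
        calc K * (((2:ℝ)⁻¹) ^ (-(s+1)) * Real.Gamma (s+1))
            = ((2 * Real.exp (-1)) * ((β / 2⁻¹) ^ β * Real.exp (-β))
                * (2 ^ s * Real.Gamma (s+1))) * x⁻¹ := by rw [hK, h2inv]; ring
          _ ≤ ((2 + 1/β) * Mx * dconst s) * x⁻¹ := by
              apply mul_le_mul_of_nonneg_right _ (inv_nonneg.mpr hx)
              apply mul_le_mul _ hsd (mul_nonneg (Real.rpow_nonneg (by norm_num) s) hΓpos.le)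
                (mul_nonneg (by nlinarith) hMx0)
              apply mul_le_mul (by nlinarith) hA' hsup0 (by nlinarith)
          _ = (2 + 1/β) * Mx * dconst s * x⁻¹ := by ring
end
end
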